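/- arXiv:1904.12682 — 13 statements merged into one kernel-verified Lean document; each statement's English description precedes it below -/
import Mathlib

section
/- Let N be a finite set, f : 2^N → ℝ, and 0 < γ ≤ 1. If f({i}∣S) ≥ γ·f({i}∣T) for all S ⊆ T ⊆ N and all i ∈ N∖T, then f(A) − f(A ∩ B) ≥ γ·(f(A ∪ B) − f(B)) for all A, B ⊆ N. (Proposition 1, (ii) ⇒ (i).) -/
/-- Proposition 1, (ii) ⇒ (i): if the marginal gains satisfy
`f({i}∣S) ≥ γ · f({i}∣T)` for all `S ⊆ T ⊆ N` and `i ∈ N \ T`, then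
`f A - f (A ∩ B) ≥ γ (f (A ∪ B) - f B)` for all subsets `A, B` of `N`. -/
theorem prop1_ii_imp_i {α : Type*} [DecidableEq α] (N : Finset α) (f : Finset α → ℝ)
    (γ : ℝ) (hγ0 : 0 < γ) (hγ1 : γ ≤ 1)
    (h : ∀ S T : Finset α, S ⊆ T → T ⊆ N → ∀ i ∈ N, i ∉ T →
      f (insert i S) - f S ≥ γ * (f (insert i T) - f T)) :
    ∀ A B : Finset α, A ⊆ N → B ⊆ N →
      f A - f (A ∩ B) ≥ γ * (f (A ∪ B) - f B) := by
  have key : ∀ D : Finset α, D ⊆ N → ∀ B : Finset α, B ⊆ N → Disjoint D B →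
      ∀ C : Finset α, C ⊆ B →
      f (C ∪ D) - f C ≥ γ * (f (B ∪ D) - f B) := by
    intro D
    induction D using Finset.induction_on with
    | empty =>
      intro _ B _ _ C _
      simp
    | @insert i D hiD ih =>
      intro hDN B hBN hdisj C hCB
      have hiN : i ∈ N := hDN (Finset.mem_insert_self i D)
      have hDN' : D ⊆ N := fun x hx => hDN (Finset.mem_insert_of_mem hx)
      have hdisj' : Disjoint D B :=
        (Finset.disjoint_insert_left.mp hdisj).2
      have hiB : i ∉ B := (Finset.disjoint_insert_left.mp hdisj).1
      have hstep := h (C ∪ D) (B ∪ D) (Finset.union_subset_union_left hCB)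
        (Finset.union_subset hBN hDN') i hiN
        (by simp [hiB, hiD])
      have hIH := ih hDN' B hBN hdisj' C hCB
      have e1 : C ∪ insert i D = insert i (C ∪ D) := by
        ext x; simp [Finset.mem_insert, Finset.mem_union]
      have e2 : B ∪ insert i D = insert i (B ∪ D) := by
        ext x; simp [Finset.mem_insert, Finset.mem_union]
      rw [e1, e2]
      have : γ * (f (insert i (B ∪ D)) - f B)
          = γ * (f (insert i (B ∪ D)) - f (B ∪ D)) + γ * (f (B ∪ D) - f B) := by
        ring
      linarith
  intro A B hAN hBN
  have hd : Disjoint (A \ B) B := Finset.sdiff_disjoint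
  have hsub : A \ B ⊆ N := (Finset.sdiff_subset).trans hAN
  have e1 : (A ∩ B) ∪ (A \ B) = A := by
    ext x; simp [Finset.mem_union, Finset.mem_inter, Finset.mem_sdiff]; tauto
  have e2 : B ∪ (A \ B) = A ∪ B := by
    ext x; simp [Finset.mem_union, Finset.mem_sdiff]; tauto
  have := key (A \ B) hsub B hBN hd (A ∩ B) Finset.inter_subset_right
  rwa [e1, e2] at this
end

section
/- Let N be a finite set, f : 2^N → ℝ, and 0 < γ ≤ γ̄ ≤ 1. If f satisfies condition (ii) with ratio γ and condition (iii) with ratio γ̄, then for all S, T ⊆ N and all distinct j₁, j₂ ∈ T∖S: f(S ∪ T) − f(S) ≤ f({j₁}∣S) + (1/γ̄)·f({j₂}∣S) + Σ_{j ∈ T∖(S∪{j₁,j₂})} (1/γ)·f({j}∣S). (Upper-bound half of the proof of Proposition 1, (iii) ⇒ (iv).) -/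
/-!
Telescope `f (S ∪ T) - f S` along the chain `S ⊂ S ∪ {j₁} ⊂ S ∪ {j₁, j₂} ⊂ S ∪ T`. The first
step is `f({j₁}∣S)` itself; the second is the gain of `j₂` after adding the single element `j₁`,
which condition (iii) bounds by `(1/γ̄)·f({j₂}∣S)`; each remaining element `j` is added to a
superset of `S`, so condition (ii) bounds its gain by `(1/γ)·f({j}∣S)`.
-/

open Finset

lemma le_one_div_mul_of_mul_le {a b c : ℝ} (hc : 0 < c) (h : c * b ≤ a) : b ≤ 1 / c * a := by
  rw [one_div_mul_eq_div]
  exact (le_div_iff₀' hc).2 h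

section

variable {α : Type*} [DecidableEq α] {N : Finset α} {f : Finset α → ℝ} {γ : ℝ}

lemma sub_le_sum_one_div_mul_of_ratio (hγ : 0 < γ)
    (hii : ∀ S T : Finset α, S ⊆ T → T ⊆ N → ∀ i ∈ N, i ∉ T →
      f (insert i S) - f S ≥ γ * (f (insert i T) - f T))
    {S B R : Finset α} (hSB : S ⊆ B) (hBN : B ⊆ N) (hRN : R ⊆ N) (hRB : Disjoint R B) :
    f (B ∪ R) - f B ≤ ∑ j ∈ R, 1 / γ * (f (insert j S) - f S) := by
  induction R using Finset.induction_on with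
  | empty => simp
  | insert a R haR ih =>
    obtain ⟨haN, hRN⟩ := insert_subset_iff.1 hRN
    obtain ⟨haB, hRB⟩ := disjoint_insert_left.1 hRB
    have hstep : f (insert a (B ∪ R)) - f (B ∪ R) ≤ 1 / γ * (f (insert a S) - f S) :=
      le_one_div_mul_of_mul_le hγ <| hii S (B ∪ R) (hSB.trans subset_union_left)
        (union_subset hBN hRN) a haN (by simp [haB, haR])
    rw [union_insert, sum_insert haR]
    linarith [ih hRN hRB]

end

theorem prop1_iii_imp_iv_upper_general {α : Type*} [DecidableEq α] (N : Finset α)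
    (f : Finset α → ℝ) (γ γb : ℝ) (hγ0 : 0 < γ) (hγγb : γ ≤ γb)
    (hii : ∀ S T : Finset α, S ⊆ T → T ⊆ N → ∀ i ∈ N, i ∉ T →
      f (insert i S) - f S ≥ γ * (f (insert i T) - f T))
    (hiii : ∀ S : Finset α, S ⊆ N → ∀ e ∈ N, ∀ i ∈ N, i ∉ S → i ≠ e →
      f (insert i S) - f S ≥ γb * (f (insert i (insert e S)) - f (insert e S))) :
    ∀ S T : Finset α, S ⊆ N → T ⊆ N → ∀ j₁ ∈ T \ S, ∀ j₂ ∈ T \ S, j₁ ≠ j₂ →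
      f (S ∪ T) - f S ≤
        (f (insert j₁ S) - f S) + (1 / γb) * (f (insert j₂ S) - f S) +
          ∑ j ∈ T \ (S ∪ {j₁, j₂}), (1 / γ) * (f (insert j S) - f S) := by
  intro S T hSN hTN j₁ hj₁ j₂ hj₂ hne
  rw [mem_sdiff] at hj₁ hj₂
  have hAN : insert j₂ (insert j₁ S) ⊆ N :=
    insert_subset (hTN hj₂.1) (insert_subset (hTN hj₁.1) hSN)
  have hRA : Disjoint (T \ (S ∪ {j₁, j₂})) (insert j₂ (insert j₁ S)) := by
    rw [disjoint_left]
    simp only [mem_union, mem_insert, mem_sdiff, mem_singleton]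
    tauto
  have hAR : insert j₂ (insert j₁ S) ∪ (T \ (S ∪ {j₁, j₂})) = S ∪ T := by
    ext x
    simp only [mem_union, mem_insert, mem_sdiff, mem_singleton]
    grind
  have hrest := sub_le_sum_one_div_mul_of_ratio hγ0 hii
    ((subset_insert _ _).trans (subset_insert _ _)) hAN (sdiff_subset.trans hTN) hRA
  have hpair : f (insert j₂ (insert j₁ S)) - f (insert j₁ S) ≤
      1 / γb * (f (insert j₂ S) - f S) :=
    le_one_div_mul_of_mul_le (hγ0.trans_le hγγb)
      (hiii S hSN j₁ (hTN hj₁.1) j₂ (hTN hj₂.1) hj₂.2 hne.symm)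
  rw [hAR] at hrest
  linarith

/-- Upper-bound half of the proof of Proposition 1, (iii) ⇒ (iv): if `f` satisfies
condition (ii) with ratio `γ` and condition (iii) with ratio `γ̄`, then for all
`S, T ⊆ N` and distinct `j₁, j₂ ∈ T \ S`:
`f(S ∪ T) - f S ≤ f({j₁}∣S) + (1/γ̄)·f({j₂}∣S) + Σ_{j ∈ T∖(S∪{j₁,j₂})} (1/γ)·f({j}∣S)`. -/
theorem prop1_iii_imp_iv_upper {α : Type*} [DecidableEq α] (N : Finset α)
    (f : Finset α → ℝ) (γ γb : ℝ) (hγ0 : 0 < γ) (hγγb : γ ≤ γb) (hγb1 : γb ≤ 1)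
    (hii : ∀ S T : Finset α, S ⊆ T → T ⊆ N → ∀ i ∈ N, i ∉ T →
      f (insert i S) - f S ≥ γ * (f (insert i T) - f T))
    (hiii : ∀ S : Finset α, S ⊆ N → ∀ e ∈ N, ∀ i ∈ N, i ∉ S → i ≠ e →
      f (insert i S) - f S ≥ γb * (f (insert i (insert e S)) - f (insert e S))) :
    ∀ S T : Finset α, S ⊆ N → T ⊆ N → ∀ j₁ ∈ T \ S, ∀ j₂ ∈ T \ S, j₁ ≠ j₂ →
      f (S ∪ T) - f S ≤
        (f (insert j₁ S) - f S) + (1 / γb) * (f (insert j₂ S) - f S) +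
          ∑ j ∈ T \ (S ∪ {j₁, j₂}), (1 / γ) * (f (insert j S) - f S) :=
  prop1_iii_imp_iv_upper_general N f γ γb hγ0 hγγb hii hiii
end

section
/- Let N be a finite set, f : 2^N → ℝ, and 0 < γ ≤ 1. If f satisfies condition (ii) with ratio γ, then for all S, T ⊆ N: f(S ∪ T) − f(T) ≥ Σ_{i ∈ S∖T} γ·f({i}∣(S ∪ T)∖{i}). (Lower-bound half of the proof of Proposition 1, (iii) ⇒ (iv).) -/
/-- Lower-bound half of the proof of Proposition 1, (iii) ⇒ (iv): if `f` satisfies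
condition (ii) with ratio `γ`, then for all `S, T ⊆ N`:
`f(S ∪ T) - f T ≥ Σ_{i ∈ S∖T} γ·f({i}∣(S ∪ T)∖{i})`. -/
theorem prop1_iii_imp_iv_lower {α : Type*} [DecidableEq α] (N : Finset α)
    (f : Finset α → ℝ) (γ : ℝ) (hγ0 : 0 < γ) (hγ1 : γ ≤ 1)
    (hii : ∀ S T : Finset α, S ⊆ T → T ⊆ N → ∀ i ∈ N, i ∉ T →
      f (insert i S) - f S ≥ γ * (f (insert i T) - f T)) :
    ∀ S T : Finset α, S ⊆ N → T ⊆ N →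
      f (S ∪ T) - f T ≥
        ∑ i ∈ S \ T,
          γ * (f (insert i ((S ∪ T).erase i)) - f ((S ∪ T).erase i)) := by
  intro S T hS hT
  set U := S ∪ T with hU
  have hUN : U ⊆ N := Finset.union_subset hS hT
  -- key lemma by induction on D
  have key : ∀ D : Finset α, (∀ i ∈ D, i ∉ T) → D ∪ T ⊆ U →
      f (D ∪ T) - f T ≥ ∑ i ∈ D, γ * (f U - f (U.erase i)) := by
    intro D
    induction D using Finset.induction with
    | empty => simp
    | @insert a D ha ih =>
      intro hdisj hsub
      have haT : a ∉ T := hdisj a (Finset.mem_insert_self a D)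
      have haDT : a ∉ D ∪ T := by
        simp [ha, haT]
      have hDTsub : D ∪ T ⊆ U := fun x hx => hsub (by
        rcases Finset.mem_union.mp hx with h | h
        · exact Finset.mem_union_left _ (Finset.mem_insert_of_mem h)
        · exact Finset.mem_union_right _ h)
      have haU : a ∈ U := hsub (Finset.mem_union_left _ (Finset.mem_insert_self a D))
      have hsub' : D ∪ T ⊆ U.erase a := by
        intro x hx
        exact Finset.mem_erase.mpr ⟨fun hxa => haDT (hxa ▸ hx), hDTsub hx⟩
      have h1 : f (insert a (D ∪ T)) - f (D ∪ T) ≥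
          γ * (f (insert a (U.erase a)) - f (U.erase a)) :=
        hii (D ∪ T) (U.erase a) hsub' ((Finset.erase_subset a U).trans hUN)
          a (hUN haU) (Finset.notMem_erase a U)
      rw [Finset.insert_erase haU] at h1
      have h2 := ih (fun i hi => hdisj i (Finset.mem_insert_of_mem hi)) hDTsub
      rw [Finset.sum_insert ha, Finset.insert_union]
      have : f (insert a (D ∪ T)) - f T =
          (f (insert a (D ∪ T)) - f (D ∪ T)) + (f (D ∪ T) - f T) := by ring
      rw [this]
      exact add_le_add h1 h2
  have hmain := key (S \ T) (fun i hi => (Finset.mem_sdiff.mp hi).2)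
    (by rw [Finset.sdiff_union_self_eq_union])
  rw [Finset.sdiff_union_self_eq_union] at hmain
  refine hmain.trans_eq' (Finset.sum_congr rfl fun i hi => ?_)
  have hiU : i ∈ U := Finset.mem_union_left _ (Finset.mem_sdiff.mp hi).1
  rw [Finset.insert_erase hiU]
end

section
/- Let N be a finite set, f : 2^N → ℝ, and 0 < γ ≤ γ̄ ≤ 1. If f satisfies condition (ii) with ratio γ and condition (iii) with ratio γ̄, then for all S, T ⊆ N and all distinct j₁, j₂ ∈ T∖S: f(T) ≤ f(S) + f({j₁}∣S) + (1/γ̄)·f({j₂}∣S) + Σ_{j ∈ T∖(S∪{j₁,j₂})} (1/γ)·f({j}∣S) − Σ_{i ∈ S∖T} γ·f({i}∣(S ∪ T)∖{i}). (Proposition 1, item (iv).) -/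
lemma prop1_iv_lemA {α : Type*} [DecidableEq α] (N : Finset α)
    (f : Finset α → ℝ) (γ : ℝ) (hγ0 : 0 < γ)
    (hii : ∀ S T : Finset α, S ⊆ T → T ⊆ N → ∀ i ∈ N, i ∉ T →
      f (insert i S) - f S ≥ γ * (f (insert i T) - f T)) (S : Finset α) :
    ∀ C : Finset α, C ⊆ N → ∀ B : Finset α, S ⊆ B → B ⊆ N → Disjoint C B →
      f (B ∪ C) - f B ≤ ∑ j ∈ C, (1 / γ) * (f (insert j S) - f S) := by
  intro C
  induction C using Finset.induction_on with
  | empty => simp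
  | @insert j C hj ih =>
    intro hCN B hSB hBN hdisj
    have hjN : j ∈ N := hCN (Finset.mem_insert_self j C)
    have hjB : j ∉ B := (Finset.disjoint_left.mp hdisj) (Finset.mem_insert_self j C)
    have h1 := hii S B hSB hBN j hjN hjB
    have h1' : f (insert j B) - f B ≤ (1 / γ) * (f (insert j S) - f S) := by
      rw [ge_iff_le] at h1
      calc f (insert j B) - f B = (1 / γ) * (γ * (f (insert j B) - f B)) := by
            field_simp
        _ ≤ (1 / γ) * (f (insert j S) - f S) := by
            apply mul_le_mul_of_nonneg_left h1; positivity
    have hdisj' : Disjoint C (insert j B) := by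
      rw [Finset.disjoint_left]
      intro x hx
      simp only [Finset.mem_insert, not_or]
      exact ⟨fun h => hj (h ▸ hx),
        (Finset.disjoint_left.mp hdisj) (Finset.mem_insert_of_mem hx)⟩
    have hih := ih (fun x hx => hCN (Finset.mem_insert_of_mem hx)) (insert j B)
      (hSB.trans (Finset.subset_insert j B)) (Finset.insert_subset hjN hBN) hdisj'
    have hU : B ∪ insert j C = insert j B ∪ C := by
      rw [Finset.union_insert, Finset.insert_union]
    rw [hU, Finset.sum_insert hj]
    linarith

lemma prop1_iv_lemB {α : Type*} [DecidableEq α] (N : Finset α)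
    (f : Finset α → ℝ) (γ : ℝ)
    (hii : ∀ S T : Finset α, S ⊆ T → T ⊆ N → ∀ i ∈ N, i ∉ T →
      f (insert i S) - f S ≥ γ * (f (insert i T) - f T)) :
    ∀ D : Finset α, ∀ A B : Finset α, B ⊆ A → A ⊆ N → D = A \ B →
      f A - f B ≥ ∑ i ∈ D, γ * (f (insert i (A.erase i)) - f (A.erase i)) := by
  intro D
  induction D using Finset.induction_on with
  | empty =>
    intro A B hBA hAN hD
    have : A = B := Finset.Subset.antisymm
      (fun x hx => by
        by_contra hxB
        have : x ∈ A \ B := Finset.mem_sdiff.mpr ⟨hx, hxB⟩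
        rw [← hD] at this; exact absurd this (Finset.notMem_empty x)) hBA
    simp [this]
  | @insert i D hiD ih =>
    intro A B hBA hAN hD
    have hiAB : i ∈ A \ B := hD ▸ Finset.mem_insert_self i D
    have hiA : i ∈ A := (Finset.mem_sdiff.mp hiAB).1
    have hiB : i ∉ B := (Finset.mem_sdiff.mp hiAB).2
    have hBsub : B ⊆ A.erase i := fun x hx =>
      Finset.mem_erase.mpr ⟨fun h => hiB (h ▸ hx), hBA hx⟩
    have h1 := hii B (A.erase i) hBsub ((Finset.erase_subset i A).trans hAN)
      i (hAN hiA) (Finset.notMem_erase i A)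
    have hB'A : insert i B ⊆ A := Finset.insert_subset hiA hBA
    have hD' : D = A \ insert i B := by
      rw [Finset.sdiff_insert, ← hD, Finset.erase_insert hiD]
    have hih := ih A (insert i B) hB'A hAN hD'
    rw [Finset.sum_insert hiD]
    have : f (insert i B) - f B ≥ γ * (f (insert i (A.erase i)) - f (A.erase i)) := h1
    linarith

/-- Proposition 1, item (iv): if `f` satisfies condition (ii) with ratio `γ` and
condition (iii) with ratio `γ̄`, then for all `S, T ⊆ N` and distinct
`j₁, j₂ ∈ T \ S`:
`f T ≤ f S + f({j₁}∣S) + (1/γ̄)·f({j₂}∣S) + Σ_{j ∈ T∖(S∪{j₁,j₂})} (1/γ)·f({j}∣S)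
      − Σ_{i ∈ S∖T} γ·f({i}∣(S ∪ T)∖{i})`. -/
theorem prop1_item_iv {α : Type*} [DecidableEq α] (N : Finset α)
    (f : Finset α → ℝ) (γ γb : ℝ) (hγ0 : 0 < γ) (hγγb : γ ≤ γb) (hγb1 : γb ≤ 1)
    (hii : ∀ S T : Finset α, S ⊆ T → T ⊆ N → ∀ i ∈ N, i ∉ T →
      f (insert i S) - f S ≥ γ * (f (insert i T) - f T))
    (hiii : ∀ S : Finset α, S ⊆ N → ∀ e ∈ N, ∀ i ∈ N, i ∉ S → i ≠ e →
      f (insert i S) - f S ≥ γb * (f (insert i (insert e S)) - f (insert e S))) :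
    ∀ S T : Finset α, S ⊆ N → T ⊆ N → ∀ j₁ ∈ T \ S, ∀ j₂ ∈ T \ S, j₁ ≠ j₂ →
      f T ≤
        f S + (f (insert j₁ S) - f S) + (1 / γb) * (f (insert j₂ S) - f S) +
          (∑ j ∈ T \ (S ∪ {j₁, j₂}), (1 / γ) * (f (insert j S) - f S)) -
          ∑ i ∈ S \ T,
            γ * (f (insert i ((S ∪ T).erase i)) - f ((S ∪ T).erase i)) := by
  intro S T hSN hTN j₁ hj₁ j₂ hj₂ hne
  obtain ⟨hj₁T, hj₁S⟩ := Finset.mem_sdiff.mp hj₁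
  obtain ⟨hj₂T, hj₂S⟩ := Finset.mem_sdiff.mp hj₂
  have hγb0 : 0 < γb := lt_of_lt_of_le hγ0 hγγb
  have hj₁N : j₁ ∈ N := hTN hj₁T
  have hj₂N : j₂ ∈ N := hTN hj₂T
  set C : Finset α := T \ (S ∪ {j₁, j₂}) with hC
  set S₂ : Finset α := insert j₂ (insert j₁ S) with hS₂
  have hA : S₂ ∪ C = S ∪ T := by
    ext x
    simp only [hS₂, hC, Finset.mem_union, Finset.mem_insert, Finset.mem_sdiff,
      Finset.mem_singleton, not_or]
    constructor
    · rintro ((rfl | rfl | h) | ⟨h, _⟩)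
      · exact Or.inr hj₂T
      · exact Or.inr hj₁T
      · exact Or.inl h
      · exact Or.inr h
    · rintro (h | h)
      · tauto
      · by_cases h1 : x = j₁
        · tauto
        · by_cases h2 : x = j₂
          · tauto
          · by_cases h3 : x ∈ S <;> tauto
  -- step 2 : condition (iii)
  have h2 := hiii S hSN j₁ hj₁N j₂ hj₂N hj₂S hne.symm
  have h2' : f S₂ - f (insert j₁ S) ≤ (1 / γb) * (f (insert j₂ S) - f S) := by
    rw [ge_iff_le] at h2
    calc f S₂ - f (insert j₁ S)
        = (1 / γb) * (γb * (f S₂ - f (insert j₁ S))) := by field_simp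
      _ ≤ (1 / γb) * (f (insert j₂ S) - f S) := by
          apply mul_le_mul_of_nonneg_left h2; positivity
  -- step 3 : lemma A
  have hCN : C ⊆ N := (Finset.sdiff_subset).trans hTN
  have hSS₂ : S ⊆ S₂ := (Finset.subset_insert j₁ S).trans (Finset.subset_insert j₂ _)
  have hS₂N : S₂ ⊆ N := Finset.insert_subset hj₂N (Finset.insert_subset hj₁N hSN)
  have hdisj : Disjoint C S₂ := by
    rw [Finset.disjoint_left]
    intro x hx
    simp only [hC, Finset.mem_sdiff, Finset.mem_union, Finset.mem_insert,
      Finset.mem_singleton, not_or] at hx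
    simp only [hS₂, Finset.mem_insert, not_or]
    tauto
  have h3 := prop1_iv_lemA N f γ hγ0 hii S C hCN S₂ hSS₂ hS₂N hdisj
  rw [hA] at h3
  -- step 4 : lemma B
  have hST : S \ T = (S ∪ T) \ T := by
    ext x; simp only [Finset.mem_sdiff, Finset.mem_union]; tauto
  have h4 := prop1_iv_lemB N f γ hii (S \ T) (S ∪ T) T
    Finset.subset_union_right (Finset.union_subset hSN hTN) hST
  linarith
end

section
/- Let N be a finite set, f : 2^N → ℝ, and 0 < γ ≤ γ̄ ≤ 1. Suppose that for all S ⊆ T ⊆ N with |T∖S| ≥ 2 and all distinct j₁, j₂ ∈ T∖S one has f(T) ≤ f(S) + f({j₁}∣S) + (1/γ̄)·f({j₂}∣S) + Σ_{j ∈ T∖(S∪{j₁,j₂})} (1/γ)·f({j}∣S) (condition (v)). Then f satisfies condition (iii) with ratio γ̄, i.e., f({j₂}∣S) ≥ γ̄·f({j₂}∣S ∪ {j₁}) for all S ⊆ N and all distinct j₁, j₂ ∈ N∖S. (Proposition 1, (v) ⇒ (iii).) -/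
/-- Proposition 1, (v) ⇒ (iii): if `f` satisfies condition (v), i.e. for all
`S ⊆ T ⊆ N` with `|T \ S| ≥ 2` and all distinct `j₁, j₂ ∈ T \ S`,
`f T ≤ f S + f({j₁}∣S) + (1/γ̄)·f({j₂}∣S) + Σ_{j ∈ T∖(S∪{j₁,j₂})} (1/γ)·f({j}∣S)`,
then `f` satisfies condition (iii) with ratio `γ̄`:
`f({j₂}∣S) ≥ γ̄·f({j₂}∣S ∪ {j₁})` for all `S ⊆ N` and distinct `j₁, j₂ ∈ N ∖ S`. -/
theorem prop1_v_imp_iii {α : Type*} [DecidableEq α] (N : Finset α)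
    (f : Finset α → ℝ) (γ γb : ℝ) (hγ0 : 0 < γ) (hγγb : γ ≤ γb) (hγb1 : γb ≤ 1)
    (hv : ∀ S T : Finset α, S ⊆ T → T ⊆ N → 2 ≤ (T \ S).card →
      ∀ j₁ ∈ T \ S, ∀ j₂ ∈ T \ S, j₁ ≠ j₂ →
        f T ≤ f S + (f (insert j₁ S) - f S) + (1 / γb) * (f (insert j₂ S) - f S) +
          ∑ j ∈ T \ (S ∪ {j₁, j₂}), (1 / γ) * (f (insert j S) - f S)) :
    ∀ S : Finset α, S ⊆ N → ∀ j₁ ∈ N, ∀ j₂ ∈ N, j₁ ∉ S → j₂ ∉ S → j₁ ≠ j₂ →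
      f (insert j₂ S) - f S ≥
        γb * (f (insert j₂ (insert j₁ S)) - f (insert j₁ S)) := by
  intro S hSN j₁ hj₁N j₂ hj₂N hj₁S hj₂S hne
  have hγb0 : (0:ℝ) < γb := lt_of_lt_of_le hγ0 hγγb
  set T : Finset α := insert j₂ (insert j₁ S) with hT
  have hST : S ⊆ T := (Finset.subset_insert _ _).trans (Finset.subset_insert _ _)
  have hTN : T ⊆ N := by
    intro x hx
    simp only [hT, Finset.mem_insert] at hx
    rcases hx with rfl | rfl | hx
    · exact hj₂N
    · exact hj₁N
    · exact hSN hx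
  have hdiff : T \ S = {j₁, j₂} := by
    ext x
    simp only [hT, Finset.mem_sdiff, Finset.mem_insert, Finset.mem_singleton]
    constructor
    · rintro ⟨rfl | rfl | hx, hxS⟩
      · exact Or.inr rfl
      · exact Or.inl rfl
      · exact absurd hx hxS
    · rintro (rfl | rfl)
      · exact ⟨Or.inr (Or.inl rfl), hj₁S⟩
      · exact ⟨Or.inl rfl, hj₂S⟩
  have hcard : 2 ≤ (T \ S).card := by
    rw [hdiff, Finset.card_insert_of_notMem (by simpa using hne), Finset.card_singleton]
  have hj₁ : j₁ ∈ T \ S := by rw [hdiff]; simp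
  have hj₂ : j₂ ∈ T \ S := by rw [hdiff]; simp
  have hempty : T \ (S ∪ {j₁, j₂}) = ∅ := by
    rw [Finset.sdiff_eq_empty_iff_subset]
    intro x hx
    simp only [hT, Finset.mem_insert] at hx
    simp only [Finset.mem_union, Finset.mem_insert, Finset.mem_singleton]
    tauto
  have h := hv S T hST hTN hcard j₁ hj₁ j₂ hj₂ hne
  rw [hempty, Finset.sum_empty] at h
  have hTval : f T = f (insert j₂ (insert j₁ S)) := by rw [hT]
  rw [hTval] at h
  have := mul_le_mul_of_nonneg_left h (le_of_lt hγb0)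
  have heq : γb * (f S + (f (insert j₁ S) - f S) + 1 / γb * (f (insert j₂ S) - f S) + 0)
      = γb * f (insert j₁ S) + (f (insert j₂ S) - f S) := by
    field_simp
    ring
  rw [heq] at this
  linarith
end

section
/- Let N be a finite set, f : 2^N → ℝ, and 0 < γ ≤ 1. If f({i}∣S) ≥ γ·f({i}∣T) ≥ 0 for all S ⊆ T ⊆ N and all i ∈ N∖T (condition (ii*)), then f is non-decreasing (f(A) ≤ f(B) whenever A ⊆ B ⊆ N) and f(A) − f(A ∩ B) ≥ γ·(f(A ∪ B) − f(B)) for all A, B ⊆ N. (Proposition 2, (ii*) ⇒ (i*).) -/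
/-- Proposition 2, (ii*) ⇒ (i*): if `f({i}∣S) ≥ γ·f({i}∣T) ≥ 0` for all
`S ⊆ T ⊆ N` and `i ∈ N ∖ T`, then `f` is non-decreasing on subsets of `N` and
`f A - f (A ∩ B) ≥ γ (f (A ∪ B) - f B)` for all `A, B ⊆ N`. -/
theorem prop2_iistar_imp_istar {α : Type*} [DecidableEq α] (N : Finset α)
    (f : Finset α → ℝ) (γ : ℝ) (hγ0 : 0 < γ) (hγ1 : γ ≤ 1)
    (hiistar : ∀ S T : Finset α, S ⊆ T → T ⊆ N → ∀ i ∈ N, i ∉ T →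
      f (insert i S) - f S ≥ γ * (f (insert i T) - f T) ∧
        γ * (f (insert i T) - f T) ≥ 0) :
    (∀ A B : Finset α, A ⊆ B → B ⊆ N → f A ≤ f B) ∧
      (∀ A B : Finset α, A ⊆ N → B ⊆ N →
        f A - f (A ∩ B) ≥ γ * (f (A ∪ B) - f B)) := by
  -- single-step monotonicity
  have hstep : ∀ T : Finset α, T ⊆ N → ∀ i ∈ N, i ∉ T → f T ≤ f (insert i T) := by
    intro T hT i hiN hiT
    have h := (hiistar T T le_rfl hT i hiN hiT).2
    nlinarith
  -- monotonicity
  have hmono : ∀ D A : Finset α, A ∪ D ⊆ N → Disjoint D A → f A ≤ f (A ∪ D) := by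
    intro D
    induction D using Finset.induction_on with
    | empty => intro A h _; simp
    | @insert i s his ih =>
      intro A hsub hdisj
      have hiA : i ∉ A := by
        intro h; exact (Finset.disjoint_left.mp hdisj (Finset.mem_insert_self i s)) h
      have hds : Disjoint s A := Finset.disjoint_of_subset_left (Finset.subset_insert i s) hdisj
      have hAs : A ∪ s ⊆ N := by
        intro x hx
        apply hsub
        rcases Finset.mem_union.mp hx with h | h
        · exact Finset.mem_union_left _ h
        · exact Finset.mem_union_right _ (Finset.mem_insert_of_mem h)
      have hiN : i ∈ N := hsub (Finset.mem_union_right _ (Finset.mem_insert_self i s))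
      have hiAs : i ∉ A ∪ s := by simp [hiA, his]
      have h1 := ih A hAs hds
      have h2 := hstep (A ∪ s) hAs i hiN hiAs
      have heq : A ∪ insert i s = insert i (A ∪ s) := by
        ext x; simp [Finset.mem_union, Finset.mem_insert]
      rw [heq]
      linarith
  constructor
  · intro A B hAB hBN
    have := hmono (B \ A) A (by rwa [Finset.union_sdiff_self_eq_union, Finset.union_eq_right.mpr hAB]) Finset.sdiff_disjoint
    rwa [Finset.union_sdiff_self_eq_union, Finset.union_eq_right.mpr hAB] at this
  · -- key lemma
    have key : ∀ D C B : Finset α, C ⊆ B → B ⊆ N → D ⊆ N → Disjoint D B →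
        f (C ∪ D) - f C ≥ γ * (f (B ∪ D) - f B) := by
      intro D
      induction D using Finset.induction_on with
      | empty => intro C B _ _ _ _; simp
      | @insert i s his ih =>
        intro C B hCB hBN hDN hdisj
        have hiB : i ∉ B := fun h => (Finset.disjoint_left.mp hdisj (Finset.mem_insert_self i s)) h
        have hds : Disjoint s B := Finset.disjoint_of_subset_left (Finset.subset_insert i s) hdisj
        have hsN : s ⊆ N := fun x hx => hDN (Finset.mem_insert_of_mem hx)
        have hiN : i ∈ N := hDN (Finset.mem_insert_self i s)
        have hBsN : B ∪ s ⊆ N := Finset.union_subset hBN hsN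
        have hiBs : i ∉ B ∪ s := by simp [hiB, his]
        have hCsBs : C ∪ s ⊆ B ∪ s := Finset.union_subset_union_left hCB
        have h1 := (hiistar (C ∪ s) (B ∪ s) hCsBs hBsN i hiN hiBs).1
        have h2 := ih C B hCB hBN hsN hds
        have heqC : C ∪ insert i s = insert i (C ∪ s) := by
          ext x; simp [Finset.mem_union, Finset.mem_insert]
        have heqB : B ∪ insert i s = insert i (B ∪ s) := by
          ext x; simp [Finset.mem_union, Finset.mem_insert]
        rw [heqC, heqB]
        have : γ * (f (insert i (B ∪ s)) - f B)
            = γ * (f (insert i (B ∪ s)) - f (B ∪ s)) + γ * (f (B ∪ s) - f B) := by ring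
        linarith
    intro A B hAN hBN
    have hsub : A ∩ B ⊆ B := Finset.inter_subset_right
    have hdisj : Disjoint (A \ B) B := Finset.sdiff_disjoint
    have h := key (A \ B) (A ∩ B) B hsub hBN (fun x hx => hAN (Finset.sdiff_subset hx)) hdisj
    have e1 : A ∩ B ∪ A \ B = A := by
      ext x; simp [Finset.mem_union, Finset.mem_inter, Finset.mem_sdiff]; tauto
    have e2 : B ∪ A \ B = A ∪ B := by
      ext x; simp [Finset.mem_union, Finset.mem_sdiff]; tauto
    rwa [e1, e2] at h
end

section
/- Let N be a finite set, f : 2^N → ℝ, and 0 < γ ≤ γ̄ ≤ 1. If f satisfies condition (ii*) with ratio γ (i.e., f({i}∣S) ≥ γ·f({i}∣T) ≥ 0 for all S ⊆ T ⊆ N, i ∈ N∖T) and condition (iii) with ratio γ̄, then for all S, T ⊆ N and all distinct j₁, j₂ ∈ T∖S: f(T) ≤ f(S) + f({j₁}∣S) + (1/γ̄)·f({j₂}∣S) + Σ_{j ∈ T∖(S∪{j₁,j₂})} (1/γ)·f({j}∣S). (Proposition 2, item (iv*).) -/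
/-- Proposition 2, item (iv*): if `f` satisfies condition (ii*) with ratio `γ` and
condition (iii) with ratio `γ̄`, then for all `S, T ⊆ N` and distinct
`j₁, j₂ ∈ T \ S`:
`f T ≤ f S + f({j₁}∣S) + (1/γ̄)·f({j₂}∣S) + Σ_{j ∈ T∖(S∪{j₁,j₂})} (1/γ)·f({j}∣S)`. -/
theorem prop2_item_ivstar {α : Type*} [DecidableEq α] (N : Finset α)
    (f : Finset α → ℝ) (γ γb : ℝ) (hγ0 : 0 < γ) (hγγb : γ ≤ γb) (hγb1 : γb ≤ 1)
    (hiistar : ∀ S T : Finset α, S ⊆ T → T ⊆ N → ∀ i ∈ N, i ∉ T →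
      f (insert i S) - f S ≥ γ * (f (insert i T) - f T) ∧
        γ * (f (insert i T) - f T) ≥ 0)
    (hiii : ∀ S : Finset α, S ⊆ N → ∀ e ∈ N, ∀ i ∈ N, i ∉ S → i ≠ e →
      f (insert i S) - f S ≥ γb * (f (insert i (insert e S)) - f (insert e S))) :
    ∀ S T : Finset α, S ⊆ N → T ⊆ N → ∀ j₁ ∈ T \ S, ∀ j₂ ∈ T \ S, j₁ ≠ j₂ →
      f T ≤ f S + (f (insert j₁ S) - f S) + (1 / γb) * (f (insert j₂ S) - f S) +
        ∑ j ∈ T \ (S ∪ {j₁, j₂}), (1 / γ) * (f (insert j S) - f S) := by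
  have hγb0 : 0 < γb := lt_of_lt_of_le hγ0 hγγb
  -- marginal gains are nonnegative
  have margnn : ∀ B : Finset α, B ⊆ N → ∀ a ∈ N, a ∉ B → f B ≤ f (insert a B) := by
    intro B hBN a haN haB
    have h2 := (hiistar B B le_rfl hBN a haN haB).2
    nlinarith [mul_pos hγ0 hγ0]
  -- monotonicity
  have mono : ∀ R : Finset α, R ⊆ N → ∀ B : Finset α, B ⊆ N → f B ≤ f (B ∪ R) := by
    intro R
    induction R using Finset.induction_on with
    | empty => intro _ B _; simp
    | @insert a R ha ih =>
      intro hRN B hBN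
      have haN : a ∈ N := hRN (Finset.mem_insert_self a R)
      have hRN' : R ⊆ N := fun x hx => hRN (Finset.mem_insert_of_mem hx)
      rw [Finset.union_insert, ← Finset.insert_union]
      by_cases hab : a ∈ B
      · rw [Finset.insert_eq_self.mpr hab]; exact ih hRN' B hBN
      · have h1 := margnn B hBN a haN hab
        have h2 := ih hRN' (insert a B) (Finset.insert_subset haN hBN)
        linarith
  intro S T hS hT j₁ hj₁ j₂ hj₂ hne
  obtain ⟨hj₁T, hj₁S⟩ := Finset.mem_sdiff.mp hj₁
  obtain ⟨hj₂T, hj₂S⟩ := Finset.mem_sdiff.mp hj₂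
  have hj₁N : j₁ ∈ N := hT hj₁T
  have hj₂N : j₂ ∈ N := hT hj₂T
  -- key lemma: adding a set R of fresh elements to B ⊇ S costs at most Σ (1/γ) marginals
  have lemB : ∀ R : Finset α, R ⊆ N → ∀ B : Finset α, S ⊆ B → B ⊆ N → Disjoint R B →
      f (B ∪ R) ≤ f B + ∑ j ∈ R, (1 / γ) * (f (insert j S) - f S) := by
    intro R
    induction R using Finset.induction_on with
    | empty => intro _ B _ _ _; simp
    | @insert a R ha ih =>
      intro hRN B hSB hBN hdisj
      have haN : a ∈ N := hRN (Finset.mem_insert_self a R)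
      have hRN' : R ⊆ N := fun x hx => hRN (Finset.mem_insert_of_mem hx)
      have haB : a ∉ B := Finset.disjoint_left.mp hdisj (Finset.mem_insert_self a R)
      have hdisj' : Disjoint R (insert a B) := by
        rw [Finset.disjoint_insert_right]
        exact ⟨ha, (Finset.disjoint_insert_left.mp hdisj).2⟩
      have h2 := ih hRN' (insert a B) (hSB.trans (Finset.subset_insert a B))
        (Finset.insert_subset haN hBN) hdisj'
      have h1 := (hiistar S B hSB hBN a haN haB).1
      have h3 : f (insert a B) - f B ≤ (1 / γ) * (f (insert a S) - f S) := by
        rw [one_div, ← div_eq_inv_mul, le_div_iff₀ hγ0, mul_comm]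
        exact h1
      rw [Finset.union_insert, ← Finset.insert_union, Finset.sum_insert ha]
      linarith
  set B : Finset α := insert j₂ (insert j₁ S) with hBdef
  have hBN : B ⊆ N := Finset.insert_subset hj₂N (Finset.insert_subset hj₁N hS)
  have hBeq : S ∪ {j₁, j₂} = B := by
    ext x; simp [hBdef]; tauto
  have hset : B ∪ (T \ B) = T ∪ B := by
    ext x; simp; tauto
  have hTle : f T ≤ f (B ∪ (T \ B)) := by
    rw [hset]; exact mono B hBN T hT
  have hdisj : Disjoint (T \ B) B := Finset.sdiff_disjoint
  have hRsubN : T \ B ⊆ N := (Finset.sdiff_subset).trans hT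
  have hSB : S ⊆ B := (Finset.subset_insert j₁ S).trans (Finset.subset_insert j₂ _)
  have hmain := lemB (T \ B) hRsubN B hSB hBN hdisj
  have h1 := hiii S hS j₁ hj₁N j₂ hj₂N hj₂S hne.symm
  have h2 : f B - f (insert j₁ S) ≤ (1 / γb) * (f (insert j₂ S) - f S) := by
    rw [one_div, ← div_eq_inv_mul, le_div_iff₀ hγb0, mul_comm]
    exact h1
  rw [hBeq]
  linarith
end

section
/- Let N be a finite set, f : 2^N → ℝ, and 0 < γ ≤ γ̄ ≤ 1. Suppose f satisfies condition (ii*) with ratio γ and condition (iii) with ratio γ̄. Let T ⊆ N, let y : N → {0,1} be the indicator of T (y_j = 1 iff j ∈ T), and let η ∈ ℝ with η ≤ f(T). Then for every S ⊆ N and all distinct j₁, j₂ ∈ N∖S: η ≤ f(S) + f({j₁}∣S)·y_{j₁} + (1/γ̄)·f({j₂}∣S)·y_{j₂} + Σ_{j ∈ N∖(S∪{j₁,j₂})} (1/γ)·f({j}∣S)·y_j. (Proposition 3, forward direction: membership in X of every (η, y) with η ≤ f(T).) -/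
lemma aux_mono {α : Type*} [DecidableEq α] (N : Finset α)
    (f : Finset α → ℝ) (γ : ℝ)
    (hiistar : ∀ S T : Finset α, S ⊆ T → T ⊆ N → ∀ i ∈ N, i ∉ T →
      f (insert i S) - f S ≥ γ * (f (insert i T) - f T) ∧
        γ * (f (insert i T) - f T) ≥ 0) :
    ∀ A B : Finset α, B ⊆ N → A ⊆ N → Disjoint A B → f B ≤ f (B ∪ A) := by
  intro A
  induction A using Finset.induction_on with
  | empty => intro B hB _ _; simp
  | @insert a A' ha IH =>
    intro B hB hAN hdisj
    have haN : a ∈ N := hAN (Finset.mem_insert_self a A')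
    have hA'N : A' ⊆ N := fun x hx => hAN (Finset.mem_insert_of_mem hx)
    have hdisj' : Disjoint A' B := (Finset.disjoint_insert_left.mp hdisj).2
    have haB : a ∉ B := (Finset.disjoint_insert_left.mp hdisj).1
    have haBA : a ∉ B ∪ A' := by
      simp only [Finset.mem_union]; push_neg; exact ⟨haB, ha⟩
    have hBA : B ∪ A' ⊆ N := Finset.union_subset hB hA'N
    have h := hiistar (B ∪ A') (B ∪ A') (Finset.Subset.refl _) hBA a haN haBA
    have h1 : f (B ∪ A') ≤ f (insert a (B ∪ A')) := by linarith [h.1, h.2]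
    have heq : B ∪ insert a A' = insert a (B ∪ A') := Finset.union_insert a B A'

    rw [heq]
    exact le_trans (IH B hB hA'N hdisj') h1

lemma aux_sum {α : Type*} [DecidableEq α] (N : Finset α)
    (f : Finset α → ℝ) (γ : ℝ) (hγ0 : 0 < γ)
    (hiistar : ∀ S T : Finset α, S ⊆ T → T ⊆ N → ∀ i ∈ N, i ∉ T →
      f (insert i S) - f S ≥ γ * (f (insert i T) - f T) ∧
        γ * (f (insert i T) - f T) ≥ 0) :
    ∀ A S B : Finset α, S ⊆ B → B ⊆ N → A ⊆ N → Disjoint A B →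
      f (B ∪ A) ≤ f B + ∑ j ∈ A, (1 / γ) * (f (insert j S) - f S) := by
  intro A
  induction A using Finset.induction_on with
  | empty => intro S B _ _ _ _; simp
  | @insert a A' ha IH =>
    intro S B hSB hB hAN hdisj
    have haN : a ∈ N := hAN (Finset.mem_insert_self a A')
    have hA'N : A' ⊆ N := fun x hx => hAN (Finset.mem_insert_of_mem hx)
    have hdisj' : Disjoint A' B := (Finset.disjoint_insert_left.mp hdisj).2
    have haB : a ∉ B := (Finset.disjoint_insert_left.mp hdisj).1
    have haBA : a ∉ B ∪ A' := by
      simp only [Finset.mem_union]; push_neg; exact ⟨haB, ha⟩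
    have hBA : B ∪ A' ⊆ N := Finset.union_subset hB hA'N
    have hSBA : S ⊆ B ∪ A' := hSB.trans Finset.subset_union_left
    have h := (hiistar S (B ∪ A') hSBA hBA a haN haBA).1
    have h1 : f (insert a (B ∪ A')) - f (B ∪ A') ≤ (1 / γ) * (f (insert a S) - f S) := by
      rw [div_mul_eq_mul_div, one_mul, le_div_iff₀ hγ0, mul_comm]
      linarith
    have heq : B ∪ insert a A' = insert a (B ∪ A') := Finset.union_insert a B A'

    rw [heq, Finset.sum_insert ha]
    have h2 := IH S B hSB hB hA'N hdisj'
    linarith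


/-- Proposition 3, forward direction: if `f` satisfies conditions (ii*) and (iii),
`y` is the 0/1 indicator of `T ⊆ N`, and `η ≤ f T`, then for every `S ⊆ N` and
distinct `j₁, j₂ ∈ N ∖ S`:
`η ≤ f S + f({j₁}∣S)·y j₁ + (1/γ̄)·f({j₂}∣S)·y j₂
     + Σ_{j ∈ N∖(S∪{j₁,j₂})} (1/γ)·f({j}∣S)·y j`. -/
theorem prop3_forward {α : Type*} [DecidableEq α] (N : Finset α)
    (f : Finset α → ℝ) (γ γb : ℝ) (hγ0 : 0 < γ) (hγγb : γ ≤ γb) (hγb1 : γb ≤ 1)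
    (hiistar : ∀ S T : Finset α, S ⊆ T → T ⊆ N → ∀ i ∈ N, i ∉ T →
      f (insert i S) - f S ≥ γ * (f (insert i T) - f T) ∧
        γ * (f (insert i T) - f T) ≥ 0)
    (hiii : ∀ S : Finset α, S ⊆ N → ∀ e ∈ N, ∀ i ∈ N, i ∉ S → i ≠ e →
      f (insert i S) - f S ≥ γb * (f (insert i (insert e S)) - f (insert e S)))
    (T : Finset α) (hT : T ⊆ N)
    (y : α → ℝ) (hy : ∀ j, y j = if j ∈ T then 1 else 0)
    (η : ℝ) (hη : η ≤ f T) :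
    ∀ S : Finset α, S ⊆ N → ∀ j₁ ∈ N, ∀ j₂ ∈ N, j₁ ∉ S → j₂ ∉ S → j₁ ≠ j₂ →
      η ≤ f S + (f (insert j₁ S) - f S) * y j₁ +
        (1 / γb) * (f (insert j₂ S) - f S) * y j₂ +
        ∑ j ∈ N \ (S ∪ {j₁, j₂}), (1 / γ) * (f (insert j S) - f S) * y j := by
  intro S hS j₁ hj₁N j₂ hj₂N hj₁S hj₂S hne
  have hγb0 : 0 < γb := lt_of_lt_of_le hγ0 hγγb
  set A : Finset α := (T \ S) \ {j₁, j₂} with hAdef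
  have hAN : A ⊆ N := by
    intro x hx
    simp only [hAdef, Finset.mem_sdiff] at hx
    exact hT hx.1.1
  -- rewrite the big sum as a sum over A
  have hsum : ∑ j ∈ N \ (S ∪ {j₁, j₂}), (1 / γ) * (f (insert j S) - f S) * y j
      = ∑ j ∈ A, (1 / γ) * (f (insert j S) - f S) := by
    have hsub : A ⊆ N \ (S ∪ {j₁, j₂}) := by
      intro x hx
      simp only [hAdef, Finset.mem_sdiff, Finset.mem_insert, Finset.mem_singleton,
        Finset.mem_union] at hx ⊢
      exact ⟨hT hx.1.1, fun h => h.elim (fun h' => hx.1.2 h') hx.2⟩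
    rw [← Finset.sum_subset hsub]
    · apply Finset.sum_congr rfl
      intro x hx
      simp only [hAdef, Finset.mem_sdiff] at hx
      rw [hy x, if_pos hx.1.1, mul_one]
    · intro x hxN hxA
      have : x ∉ T := by
        simp only [hAdef, Finset.mem_sdiff, Finset.mem_union] at hxN hxA
        intro hxT
        exact hxA ⟨⟨hxT, fun h => hxN.2 (Or.inl h)⟩, fun h => hxN.2 (Or.inr h)⟩
      rw [hy x, if_neg this, mul_zero]
  rw [hsum]
  -- monotonicity : η ≤ f (S ∪ T)
  have hmono : η ≤ f (S ∪ T) := by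
    have h := aux_mono N f γ hiistar (S \ T) T hT
      (fun x hx => hS (Finset.mem_sdiff.mp hx).1)
      (Finset.sdiff_disjoint)
    rw [Finset.union_sdiff_self_eq_union, Finset.union_comm] at h
    exact le_trans hη h
  -- marginal nonnegativity at S
  have hmarg : ∀ i ∈ N, i ∉ S → (0:ℝ) ≤ f (insert i S) - f S := by
    intro i hiN hiS
    have h := hiistar S S (Finset.Subset.refl _) hS i hiN hiS
    linarith [h.1, h.2]
  have hm1 := hmarg j₁ hj₁N hj₁S
  have hm2 := hmarg j₂ hj₂N hj₂S
  by_cases hj1T : j₁ ∈ T <;> by_cases hj2T : j₂ ∈ T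
  · -- both in T
    have hB : insert j₂ (insert j₁ S) ⊆ N := by
      intro x hx
      simp only [Finset.mem_insert] at hx
      rcases hx with rfl | rfl | h
      exacts [hj₂N, hj₁N, hS h]
    have hdisj : Disjoint A (insert j₂ (insert j₁ S)) := by
      simp only [hAdef, Finset.disjoint_left, Finset.mem_sdiff, Finset.mem_insert,
        Finset.mem_singleton]
      rintro x ⟨⟨hxT, hxS⟩, hx12⟩ (rfl | rfl | h)
      · exact hx12 (Or.inr rfl)
      · exact hx12 (Or.inl rfl)
      · exact hxS h
    have heq : S ∪ T = insert j₂ (insert j₁ S) ∪ A := by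
      ext x
      simp only [hAdef, Finset.mem_union, Finset.mem_insert, Finset.mem_sdiff,
        Finset.mem_singleton]
      by_cases h1 : x = j₁ <;> by_cases h2 : x = j₂ <;> subst_vars <;> tauto
    have h1 := aux_sum N f γ hγ0 hiistar A S (insert j₂ (insert j₁ S))
      (fun x hx => Finset.mem_insert_of_mem (Finset.mem_insert_of_mem hx)) hB hAN hdisj
    have h2 := hiii S hS j₁ hj₁N j₂ hj₂N hj₂S hne.symm
    have h3 : f (insert j₂ (insert j₁ S)) - f (insert j₁ S)
        ≤ (1 / γb) * (f (insert j₂ S) - f S) := by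
      rw [div_mul_eq_mul_div, one_mul, le_div_iff₀ hγb0, mul_comm]
      linarith
    rw [heq] at hmono
    rw [hy j₁, hy j₂, if_pos hj1T, if_pos hj2T, mul_one, mul_one]
    linarith
  · -- j₁ ∈ T, j₂ ∉ T
    have hB : insert j₁ S ⊆ N := by
      intro x hx
      rcases Finset.mem_insert.mp hx with rfl | h
      exacts [hj₁N, hS h]
    have hdisj : Disjoint A (insert j₁ S) := by
      simp only [hAdef, Finset.disjoint_left, Finset.mem_sdiff, Finset.mem_insert,
        Finset.mem_singleton]
      rintro x ⟨⟨hxT, hxS⟩, hx12⟩ (rfl | h)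
      · exact hx12 (Or.inl rfl)
      · exact hxS h
    have heq : S ∪ T = insert j₁ S ∪ A := by
      ext x
      simp only [hAdef, Finset.mem_union, Finset.mem_insert, Finset.mem_sdiff,
        Finset.mem_singleton]
      by_cases h1 : x = j₁ <;> by_cases h2 : x = j₂ <;> subst_vars <;> tauto
    have h1 := aux_sum N f γ hγ0 hiistar A S (insert j₁ S)
      (Finset.subset_insert _ _) hB hAN hdisj
    rw [heq] at hmono
    rw [hy j₁, hy j₂, if_pos hj1T, if_neg hj2T, mul_one, mul_zero]
    linarith
  · -- j₁ ∉ T, j₂ ∈ T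
    have hB : insert j₂ S ⊆ N := by
      intro x hx
      rcases Finset.mem_insert.mp hx with rfl | h
      exacts [hj₂N, hS h]
    have hdisj : Disjoint A (insert j₂ S) := by
      simp only [hAdef, Finset.disjoint_left, Finset.mem_sdiff, Finset.mem_insert,
        Finset.mem_singleton]
      rintro x ⟨⟨hxT, hxS⟩, hx12⟩ (rfl | h)
      · exact hx12 (Or.inr rfl)
      · exact hxS h
    have heq : S ∪ T = insert j₂ S ∪ A := by
      ext x
      simp only [hAdef, Finset.mem_union, Finset.mem_insert, Finset.mem_sdiff,
        Finset.mem_singleton]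
      by_cases h1 : x = j₁ <;> by_cases h2 : x = j₂ <;> subst_vars <;> tauto
    have h1 := aux_sum N f γ hγ0 hiistar A S (insert j₂ S)
      (Finset.subset_insert _ _) hB hAN hdisj
    have h3 : f (insert j₂ S) - f S ≤ (1 / γb) * (f (insert j₂ S) - f S) :=
      le_mul_of_one_le_left hm2 (one_le_one_div hγb0 hγb1)
    rw [heq] at hmono
    rw [hy j₁, hy j₂, if_neg hj1T, if_pos hj2T, mul_zero, mul_one]
    linarith
  · -- neither in T
    have hdisj : Disjoint A S := by
      simp only [hAdef, Finset.disjoint_left, Finset.mem_sdiff]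
      rintro x ⟨⟨hxT, hxS⟩, _⟩ h
      exact hxS h
    have heq : S ∪ T = S ∪ A := by
      ext x
      simp only [hAdef, Finset.mem_union, Finset.mem_insert, Finset.mem_sdiff,
        Finset.mem_singleton]
      by_cases h1 : x = j₁ <;> by_cases h2 : x = j₂ <;> subst_vars <;> tauto
    have h1 := aux_sum N f γ hγ0 hiistar A S S (Finset.Subset.refl _) hS hAN hdisj
    rw [heq] at hmono
    rw [hy j₁, hy j₂, if_neg hj1T, if_neg hj2T, mul_zero, mul_zero]
    linarith
end

section
/- Let N be a finite set, f : 2^N → ℝ, and 0 < γ ≤ γ̄ ≤ 1. Suppose f satisfies condition (ii*) with ratio γ and condition (iii) with ratio γ̄. Let T ⊆ N with |N∖T| ≥ 2, let y : N → {0,1} be the indicator of T, and let η ∈ ℝ. Then η ≤ f(T) if and only if for every S ⊆ N and all distinct j₁, j₂ ∈ N∖S: η ≤ f(S) + f({j₁}∣S)·y_{j₁} + (1/γ̄)·f({j₂}∣S)·y_{j₂} + Σ_{j ∈ N∖(S∪{j₁,j₂})} (1/γ)·f({j}∣S)·y_j. (Proposition 3.) -/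
/-- Proposition 3: if `f` satisfies conditions (ii*) and (iii), `T ⊆ N` with
`|N ∖ T| ≥ 2`, and `y` is the 0/1 indicator of `T`, then `η ≤ f T` if and only if
for every `S ⊆ N` and all distinct `j₁, j₂ ∈ N ∖ S`:
`η ≤ f S + f({j₁}∣S)·y j₁ + (1/γ̄)·f({j₂}∣S)·y j₂
     + Σ_{j ∈ N∖(S∪{j₁,j₂})} (1/γ)·f({j}∣S)·y j`. -/
theorem prop3 {α : Type*} [DecidableEq α] (N : Finset α)
    (f : Finset α → ℝ) (γ γb : ℝ) (hγ0 : 0 < γ) (hγγb : γ ≤ γb) (hγb1 : γb ≤ 1)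
    (hiistar : ∀ S T : Finset α, S ⊆ T → T ⊆ N → ∀ i ∈ N, i ∉ T →
      f (insert i S) - f S ≥ γ * (f (insert i T) - f T) ∧
        γ * (f (insert i T) - f T) ≥ 0)
    (hiii : ∀ S : Finset α, S ⊆ N → ∀ e ∈ N, ∀ i ∈ N, i ∉ S → i ≠ e →
      f (insert i S) - f S ≥ γb * (f (insert i (insert e S)) - f (insert e S)))
    (T : Finset α) (hT : T ⊆ N) (hcard : 2 ≤ (N \ T).card)
    (y : α → ℝ) (hy : ∀ j, y j = if j ∈ T then 1 else 0)
    (η : ℝ) :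
    η ≤ f T ↔
      ∀ S : Finset α, S ⊆ N → ∀ j₁ ∈ N, ∀ j₂ ∈ N, j₁ ∉ S → j₂ ∉ S → j₁ ≠ j₂ →
        η ≤ f S + (f (insert j₁ S) - f S) * y j₁ +
          (1 / γb) * (f (insert j₂ S) - f S) * y j₂ +
          ∑ j ∈ N \ (S ∪ {j₁, j₂}), (1 / γ) * (f (insert j S) - f S) * y j := by
  classical
  have hγb0 : (0:ℝ) < γb := lt_of_lt_of_le hγ0 hγγb
  -- marginal gains are nonnegative
  have marg_nonneg : ∀ B : Finset α, B ⊆ N → ∀ i ∈ N, i ∉ B →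
      0 ≤ f (insert i B) - f B := by
    intro B hB i hiN hiB
    have h := hiistar B B Finset.Subset.rfl hB i hiN hiB
    nlinarith [h.1, h.2]
  -- marginal gains over a superset are bounded
  have marg_le : ∀ S0 B : Finset α, S0 ⊆ B → B ⊆ N → ∀ i ∈ N, i ∉ B →
      f (insert i B) - f B ≤ (1/γ) * (f (insert i S0) - f S0) := by
    intro S0 B hSB hBN i hiN hiB
    have h := (hiistar S0 B hSB hBN i hiN hiB).1
    rw [one_div_mul_eq_div, le_div_iff₀ hγ0]
    nlinarith
  -- monotonicity
  have mono : ∀ A : Finset α, A ⊆ N → ∀ B : Finset α, B ⊆ N → f B ≤ f (B ∪ A) := by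
    intro A
    induction A using Finset.induction_on with
    | empty => intro _ B _; simp
    | @insert a A' ha ih =>
      intro hAN B hBN
      have haN : a ∈ N := hAN (Finset.mem_insert_self a A')
      have hA'N : A' ⊆ N := fun x hx => hAN (Finset.mem_insert_of_mem hx)
      rw [Finset.union_insert]
      by_cases hab : a ∈ B ∪ A'
      · rw [Finset.insert_eq_self.2 hab]
        exact ih hA'N B hBN
      · have h1 := ih hA'N B hBN
        have h2 := marg_nonneg (B ∪ A') (Finset.union_subset hBN hA'N) a haN hab
        linarith
  have mono' : ∀ B C : Finset α, B ⊆ C → C ⊆ N → f B ≤ f C := by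
    intro B C hBC hCN
    have := mono (C \ B) ((Finset.sdiff_subset).trans hCN) B (hBC.trans hCN)
    rwa [Finset.union_sdiff_of_subset hBC] at this
  -- key telescoping lemma
  have lem1 : ∀ A : Finset α, A ⊆ N → ∀ B S0 : Finset α, B ⊆ N → S0 ⊆ B → Disjoint A B →
      f (B ∪ A) ≤ f B + ∑ j ∈ A, (1/γ) * (f (insert j S0) - f S0) := by
    intro A
    induction A using Finset.induction_on with
    | empty => intro _ B S0 _ _ _; simp
    | @insert a A' ha ih =>
      intro hAN B S0 hBN hSB hd
      have haN : a ∈ N := hAN (Finset.mem_insert_self a A')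
      have hA'N : A' ⊆ N := fun x hx => hAN (Finset.mem_insert_of_mem hx)
      have haB : a ∉ B := Finset.disjoint_left.1 hd (Finset.mem_insert_self a A')
      have hd'' : Disjoint A' B := (Finset.disjoint_insert_left.1 hd).2
      have hd' : Disjoint A' (insert a B) := by
        rw [Finset.disjoint_insert_right]
        exact ⟨ha, hd''⟩
      have key : f (insert a B) - f B ≤ (1/γ) * (f (insert a S0) - f S0) :=
        marg_le S0 B hSB hBN a haN haB
      have step := ih hA'N (insert a B) S0 (Finset.insert_subset haN hBN)
        (hSB.trans (Finset.subset_insert a B)) hd'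
      have eqU : B ∪ insert a A' = insert a B ∪ A' := by
        rw [Finset.union_insert, Finset.insert_union]
      rw [eqU, Finset.sum_insert ha]
      linarith
  constructor
  · intro hη S hS j₁ hj₁N j₂ hj₂N hj₁S hj₂S hne
    set A : Finset α := T \ (S ∪ {j₁, j₂}) with hA
    have hXN : S ∪ {j₁, j₂} ⊆ N := by
      refine Finset.union_subset hS ?_
      intro x hx
      rcases Finset.mem_insert.1 hx with h | h
      · exact h ▸ hj₁N
      · exact (Finset.mem_singleton.1 h) ▸ hj₂N
    have hAN : A ⊆ N := (Finset.sdiff_subset).trans hT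
    have hAsub : A ⊆ N \ (S ∪ {j₁, j₂}) := Finset.sdiff_subset_sdiff hT le_rfl
    -- bound the extra sum
    have sumbound : ∑ j ∈ A, (1/γ) * (f (insert j S) - f S) ≤
        ∑ j ∈ N \ (S ∪ {j₁, j₂}), (1/γ) * (f (insert j S) - f S) * y j := by
      have e1 : ∑ j ∈ A, (1/γ) * (f (insert j S) - f S) =
          ∑ j ∈ A, (1/γ) * (f (insert j S) - f S) * y j := by
        refine Finset.sum_congr rfl (fun j hj => ?_)
        have hjT : j ∈ T := (Finset.mem_sdiff.1 hj).1
        rw [hy, if_pos hjT, mul_one]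
      rw [e1]
      refine Finset.sum_le_sum_of_subset_of_nonneg hAsub (fun j hj _ => ?_)
      have hjN : j ∈ N := (Finset.mem_sdiff.1 hj).1
      have hjS : j ∉ S := fun h => (Finset.mem_sdiff.1 hj).2 (Finset.mem_union_left _ h)
      have hm := marg_nonneg S hS j hjN hjS
      have hy0 : 0 ≤ y j := by rw [hy]; split <;> norm_num
      have h1γ : 0 ≤ (1:ℝ)/γ := by positivity
      exact mul_nonneg (mul_nonneg h1γ hm) hy0
    -- choose the base set B according to membership of j₁, j₂ in T
    obtain ⟨B, hSB, hBX, hTBA, hfB⟩ : ∃ B : Finset α, S ⊆ B ∧ B ⊆ S ∪ {j₁, j₂} ∧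
        T ⊆ B ∪ A ∧ f B ≤ f S + (f (insert j₁ S) - f S) * y j₁ +
          (1/γb) * (f (insert j₂ S) - f S) * y j₂ := by
      have hTsplit : ∀ t ∈ T, t ∈ S ∪ {j₁, j₂} ∨ t ∈ A := by
        intro t ht
        by_cases h : t ∈ S ∪ {j₁, j₂}
        · exact Or.inl h
        · exact Or.inr (Finset.mem_sdiff.2 ⟨ht, h⟩)
      by_cases h1 : j₁ ∈ T <;> by_cases h2 : j₂ ∈ T
      · refine ⟨insert j₂ (insert j₁ S), ?_, ?_, ?_, ?_⟩
        · exact (Finset.subset_insert j₁ S).trans (Finset.subset_insert j₂ _)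
        · intro x hx
          rcases Finset.mem_insert.1 hx with h | h
          · subst h; exact Finset.mem_union_right _ (by simp)
          rcases Finset.mem_insert.1 h with h | h
          · subst h; exact Finset.mem_union_right _ (by simp)
          · exact Finset.mem_union_left _ h
        · intro t ht
          rcases hTsplit t ht with h | h
          · rcases Finset.mem_union.1 h with h | h
            · exact Finset.mem_union_left _ (Finset.mem_insert_of_mem (Finset.mem_insert_of_mem h))
            · rcases Finset.mem_insert.1 h with h | h
              · exact Finset.mem_union_left _ (by simp [h])
              · exact Finset.mem_union_left _ (by simp [Finset.mem_singleton.1 h])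
          · exact Finset.mem_union_right _ h
        · rw [hy j₁, hy j₂, if_pos h1, if_pos h2, mul_one, mul_one]
          have hiii' := hiii S hS j₁ hj₁N j₂ hj₂N hj₂S hne.symm
          have hstep : f (insert j₂ (insert j₁ S)) - f (insert j₁ S) ≤
              (1/γb) * (f (insert j₂ S) - f S) := by
            rw [one_div_mul_eq_div, le_div_iff₀ hγb0]
            nlinarith
          linarith
      · refine ⟨insert j₁ S, Finset.subset_insert j₁ S, ?_, ?_, ?_⟩
        · intro x hx
          rcases Finset.mem_insert.1 hx with h | h
          · subst h; exact Finset.mem_union_right _ (by simp)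
          · exact Finset.mem_union_left _ h
        · intro t ht
          rcases hTsplit t ht with h | h
          · rcases Finset.mem_union.1 h with h | h
            · exact Finset.mem_union_left _ (Finset.mem_insert_of_mem h)
            · rcases Finset.mem_insert.1 h with h | h
              · exact Finset.mem_union_left _ (by simp [h])
              · exact absurd ((Finset.mem_singleton.1 h) ▸ ht) h2
          · exact Finset.mem_union_right _ h
        · rw [hy j₁, hy j₂, if_pos h1, if_neg h2, mul_one, mul_zero]
          linarith
      · refine ⟨insert j₂ S, Finset.subset_insert j₂ S, ?_, ?_, ?_⟩
        · intro x hx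
          rcases Finset.mem_insert.1 hx with h | h
          · subst h; exact Finset.mem_union_right _ (by simp)
          · exact Finset.mem_union_left _ h
        · intro t ht
          rcases hTsplit t ht with h | h
          · rcases Finset.mem_union.1 h with h | h
            · exact Finset.mem_union_left _ (Finset.mem_insert_of_mem h)
            · rcases Finset.mem_insert.1 h with h | h
              · exact absurd (h ▸ ht) h1
              · exact Finset.mem_union_left _ (by simp [Finset.mem_singleton.1 h])
          · exact Finset.mem_union_right _ h
        · rw [hy j₁, hy j₂, if_neg h1, if_pos h2, mul_zero, mul_one]
          have hm := marg_nonneg S hS j₂ hj₂N hj₂S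
          have h1γb : (1:ℝ) ≤ 1/γb := by rw [one_le_div hγb0]; exact hγb1
          nlinarith
      · refine ⟨S, Finset.Subset.rfl, Finset.subset_union_left, ?_, ?_⟩
        · intro t ht
          rcases hTsplit t ht with h | h
          · rcases Finset.mem_union.1 h with h | h
            · exact Finset.mem_union_left _ h
            · rcases Finset.mem_insert.1 h with h | h
              · exact absurd (h ▸ ht) h1
              · exact absurd ((Finset.mem_singleton.1 h) ▸ ht) h2
          · exact Finset.mem_union_right _ h
        · rw [hy j₁, hy j₂, if_neg h1, if_neg h2, mul_zero, mul_zero]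
          linarith
    have hBN : B ⊆ N := hBX.trans hXN
    have hAdisB : Disjoint A B := (Finset.sdiff_disjoint).mono_right hBX
    have h3 : f T ≤ f (B ∪ A) := mono' T (B ∪ A) hTBA (Finset.union_subset hBN hAN)
    have h4 := lem1 A hAN B S hBN hSB hAdisB
    linarith
  · intro h
    obtain ⟨j₁, hj₁, j₂, hj₂, hne⟩ := Finset.one_lt_card.1 (by omega : 1 < (N \ T).card)
    obtain ⟨hj₁N, hj₁T⟩ := Finset.mem_sdiff.1 hj₁
    obtain ⟨hj₂N, hj₂T⟩ := Finset.mem_sdiff.1 hj₂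
    have := h T hT j₁ hj₁N j₂ hj₂N hj₁T hj₂T hne
    have hsum : ∑ j ∈ N \ (T ∪ {j₁, j₂}), (1/γ) * (f (insert j T) - f T) * y j = 0 := by
      refine Finset.sum_eq_zero (fun j hj => ?_)
      have hjT : j ∉ T := fun hh =>
        (Finset.mem_sdiff.1 hj).2 (Finset.mem_union_left _ hh)
      rw [hy, if_neg hjT, mul_zero]
    rw [hy j₁, hy j₂, if_neg hj₁T, if_neg hj₂T, mul_zero, mul_zero, hsum] at this
    linarith
end

section
/- Let N be a finite set, f : 2^N → ℝ, and 0 < γ ≤ 1. If f satisfies condition (ii*) with ratio γ, then for every S ⊆ N and every T ⊆ N∖S: f(S ∪ T) − f(S) ≤ (1/γ)·Σ_{i ∈ T} f({i}∣S). (Inequality (6), used to bound the reduced problem in the A* search heuristic.) -/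
/-- Inequality (6): if `f` satisfies condition (ii*) with ratio `γ`, then for every
`S ⊆ N` and every `T ⊆ N ∖ S`: `f(S ∪ T) - f S ≤ (1/γ)·Σ_{i ∈ T} f({i}∣S)`. -/
theorem astar_heuristic_ineq {α : Type*} [DecidableEq α] (N : Finset α)
    (f : Finset α → ℝ) (γ : ℝ) (hγ0 : 0 < γ) (hγ1 : γ ≤ 1)
    (hiistar : ∀ S T : Finset α, S ⊆ T → T ⊆ N → ∀ i ∈ N, i ∉ T →
      f (insert i S) - f S ≥ γ * (f (insert i T) - f T) ∧
        γ * (f (insert i T) - f T) ≥ 0) :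
    ∀ S T : Finset α, S ⊆ N → T ⊆ N \ S →
      f (S ∪ T) - f S ≤ (1 / γ) * ∑ i ∈ T, (f (insert i S) - f S) := by
  intro S T hS hT
  induction T using Finset.induction_on with
  | empty => simp
  | @insert a T' ha IH =>
    have haN : a ∈ N \ S := hT (Finset.mem_insert_self a T')
    have hT' : T' ⊆ N \ S := fun x hx => hT (Finset.mem_insert_of_mem hx)
    have haS : a ∉ S := (Finset.mem_sdiff.mp haN).2
    have haST : a ∉ S ∪ T' := by
      simp only [Finset.mem_union]; rintro (h | h)
      · exact haS h
      · exact ha h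
    have hsub : S ∪ T' ⊆ N := by
      apply Finset.union_subset hS
      exact hT'.trans (Finset.sdiff_subset)
    have key := hiistar S (S ∪ T') Finset.subset_union_left hsub a
      (Finset.mem_sdiff.mp haN).1 haST
    have h1 : f (insert a (S ∪ T')) - f (S ∪ T') ≤ (1/γ) * (f (insert a S) - f S) := by
      rw [one_div_mul_eq_div, le_div_iff₀ hγ0, mul_comm]
      exact key.1
    have h2 := IH hT'
    have hrw : S ∪ insert a T' = insert a (S ∪ T') := Finset.union_insert a S T'
    rw [hrw, Finset.sum_insert ha]
    calc f (insert a (S ∪ T')) - f S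
        = (f (insert a (S ∪ T')) - f (S ∪ T')) + (f (S ∪ T') - f S) := by ring
      _ ≤ (1/γ) * (f (insert a S) - f S) + (1/γ) * ∑ i ∈ T', (f (insert i S) - f S) := by
          exact add_le_add h1 h2
      _ = (1/γ) * ((f (insert a S) - f S) + ∑ i ∈ T', (f (insert i S) - f S)) := by ring
end

section
/- Let N be a finite set, f : 2^N → ℝ, and 0 < γ ≤ 1, and suppose f satisfies condition (ii*) with ratio γ. Let S ⊆ N, let W ⊆ N∖S, let p be a natural number with p ≤ |W|, and let B ⊆ W with |B| = p be a set of p elements with the largest marginal gains, i.e., f({i}∣S) ≥ f({j}∣S) for every i ∈ B and j ∈ W∖B. Then for every T ⊆ W with |T| ≤ p: f(S ∪ T) ≤ f(S) + (1/γ)·Σ_{i ∈ B} f({i}∣S). (Validity of the heuristic function h(S): f(S) + h(S) is an upper bound for the reduced problem in the A* search algorithm.) -/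
/-- Sum comparison: if `g` is nonnegative on `W`, `T, B ⊆ W`, `|T| ≤ |B|`, and every
value on `B` dominates every value on `W \ B`, then `∑_{T} g ≤ ∑_{B} g`. -/
lemma sum_le_sum_top {α : Type*} [DecidableEq α] (W B T : Finset α) (g : α → ℝ)
    (hg : ∀ i ∈ W, 0 ≤ g i) (hB : B ⊆ W) (hT : T ⊆ W) (hcard : T.card ≤ B.card)
    (htop : ∀ i ∈ B, ∀ j ∈ W \ B, g j ≤ g i) :
    ∑ i ∈ T, g i ≤ ∑ i ∈ B, g i := by
  have hTsplit : ∑ i ∈ T, g i = ∑ i ∈ T ∩ B, g i + ∑ i ∈ T \ B, g i :=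
    (Finset.sum_inter_add_sum_sdiff T B g).symm
  have hBsplit : ∑ i ∈ B, g i = ∑ i ∈ B ∩ T, g i + ∑ i ∈ B \ T, g i :=
    (Finset.sum_inter_add_sum_sdiff B T g).symm
  rw [hTsplit, hBsplit, Finset.inter_comm]
  have hkey : ∑ i ∈ T \ B, g i ≤ ∑ i ∈ B \ T, g i := by
    have hc : (T \ B).card ≤ (B \ T).card := by
      have h1 := Finset.card_inter_add_card_sdiff T B
      have h2 := Finset.card_inter_add_card_sdiff B T
      rw [Finset.inter_comm] at h2
      omega
    rcases Finset.eq_empty_or_nonempty (B \ T) with h | h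
    · have hc0 : (B \ T).card = 0 := by rw [h]; simp
      have : T \ B = ∅ := Finset.card_eq_zero.mp (by omega)
      simp [this, h]
    · set m := (B \ T).inf' h g with hm
      have hm0 : 0 ≤ m := by
        obtain ⟨i, hi, hgi⟩ := Finset.exists_mem_eq_inf' h g
        rw [hm, hgi]
        exact hg i (hB (Finset.mem_sdiff.mp hi).1)
      have h1 : ∑ i ∈ T \ B, g i ≤ (T \ B).card • m := by
        apply Finset.sum_le_card_nsmul
        intro j hj
        apply Finset.le_inf'
        intro i hi
        exact htop i (Finset.mem_sdiff.mp hi).1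
          j (Finset.mem_sdiff.mpr ⟨hT (Finset.mem_sdiff.mp hj).1, (Finset.mem_sdiff.mp hj).2⟩)
      have h2 : (B \ T).card • m ≤ ∑ i ∈ B \ T, g i := by
        apply Finset.card_nsmul_le_sum
        intro i hi
        exact Finset.inf'_le g hi
      have h3 : (T \ B).card • m ≤ (B \ T).card • m := by
        simp only [nsmul_eq_mul]
        exact mul_le_mul_of_nonneg_right (by exact_mod_cast hc) hm0
      linarith
  linarith

/-- Validity of the A* heuristic `h(S)`. -/
theorem astar_heuristic_valid {α : Type*} [DecidableEq α] (N : Finset α)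
    (f : Finset α → ℝ) (γ : ℝ) (hγ0 : 0 < γ) (hγ1 : γ ≤ 1)
    (hiistar : ∀ S T : Finset α, S ⊆ T → T ⊆ N → ∀ i ∈ N, i ∉ T →
      f (insert i S) - f S ≥ γ * (f (insert i T) - f T) ∧
        γ * (f (insert i T) - f T) ≥ 0)
    (S W B : Finset α) (hS : S ⊆ N) (hW : W ⊆ N \ S)
    (p : ℕ) (hp : p ≤ W.card) (hB : B ⊆ W) (hBcard : B.card = p)
    (hBtop : ∀ i ∈ B, ∀ j ∈ W \ B,
      f (insert i S) - f S ≥ f (insert j S) - f S) :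
    ∀ T : Finset α, T ⊆ W → T.card ≤ p →
      f (S ∪ T) ≤ f S + (1 / γ) * ∑ i ∈ B, (f (insert i S) - f S) := by
  set g : α → ℝ := fun i => f (insert i S) - f S with hg
  -- nonnegativity of marginal gains on W
  have hgnn : ∀ i ∈ W, 0 ≤ g i := by
    intro i hi
    have hiN : i ∈ N := (Finset.mem_sdiff.mp (hW hi)).1
    have hiS : i ∉ S := (Finset.mem_sdiff.mp (hW hi)).2
    have := (hiistar S S (le_refl S) hS i hiN hiS).2
    have : 0 ≤ f (insert i S) - f S := nonneg_of_mul_nonneg_right this hγ0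
    simpa [hg] using this
  -- telescoping bound
  have htel : ∀ T : Finset α, T ⊆ W → γ * (f (S ∪ T) - f S) ≤ ∑ i ∈ T, g i := by
    intro T
    induction T using Finset.induction_on with
    | empty => intro _; simp
    | @insert a T ha ih =>
      intro hsub
      have haW : a ∈ W := hsub (Finset.mem_insert_self a T)
      have hTW : T ⊆ W := fun x hx => hsub (Finset.mem_insert_of_mem hx)
      have haN : a ∈ N := (Finset.mem_sdiff.mp (hW haW)).1
      have haS : a ∉ S := (Finset.mem_sdiff.mp (hW haW)).2
      have haST : a ∉ S ∪ T := by
        simp only [Finset.mem_union]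
        push_neg
        exact ⟨haS, ha⟩
      have hSTN : S ∪ T ⊆ N := by
        intro x hx
        rcases Finset.mem_union.mp hx with h | h
        · exact hS h
        · exact (Finset.mem_sdiff.mp (hW (hTW h))).1
      have hstep := (hiistar S (S ∪ T) Finset.subset_union_left hSTN a haN haST).1
      have hins : S ∪ insert a T = insert a (S ∪ T) := by
        ext x; simp [Finset.mem_insert, Finset.mem_union, or_left_comm, or_comm]
      rw [Finset.sum_insert ha, hins]
      have hihT := ih hTW
      have : γ * (f (insert a (S ∪ T)) - f S)
          = γ * (f (insert a (S ∪ T)) - f (S ∪ T)) + γ * (f (S ∪ T) - f S) := by ring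
      rw [this]
      have : γ * (f (insert a (S ∪ T)) - f (S ∪ T)) ≤ g a := hstep
      linarith
  intro T hT hTcard
  have hsum : ∑ i ∈ T, g i ≤ ∑ i ∈ B, g i := by
    apply sum_le_sum_top W B T g hgnn hB hT (by omega)
    intro i hi j hj
    exact hBtop i hi j hj
  have h1 := htel T hT
  have h2 : γ * (f (S ∪ T) - f S) ≤ ∑ i ∈ B, g i := le_trans h1 hsum
  have h3 : f (S ∪ T) - f S ≤ (1 / γ) * ∑ i ∈ B, g i := by
    rw [div_mul_eq_mul_div, le_div_iff₀ hγ0]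
    linarith [h2]
  linarith [h3]
end

section
/- Let N be a finite set, f : 2^N → ℝ, and 0 < γ ≤ 1, and suppose f satisfies condition (ii) with ratio γ. Then for every S ⊆ N, every j ∈ N∖S, and every y : N → {0,1}: f(S) + f({j}∣S) + Σ_{i ∈ N∖(S∪{j})} (1/γ)·f({i}∣S)·y_i ≥ f(S ∪ {j}) + Σ_{i ∈ N∖(S∪{j})} f({i}∣S ∪ {j})·y_i. (Inequality (14) underlying the improved constraint generation algorithm: adding the element j to Sⁿᵃᵗ can only decrease the right-hand side of the generated constraint.) -/
/-- Inequality (14) underlying the improved constraint generation algorithm: if `f`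
satisfies condition (ii) with ratio `γ`, then for every `S ⊆ N`, `j ∈ N ∖ S`, and
0/1-valued `y`:
`f S + f({j}∣S) + Σ_{i ∈ N∖(S∪{j})} (1/γ)·f({i}∣S)·y i
  ≥ f(S ∪ {j}) + Σ_{i ∈ N∖(S∪{j})} f({i}∣S ∪ {j})·y i`. -/
theorem icg_constraint_ineq {α : Type*} [DecidableEq α] (N : Finset α)
    (f : Finset α → ℝ) (γ : ℝ) (hγ0 : 0 < γ) (hγ1 : γ ≤ 1)
    (hii : ∀ S T : Finset α, S ⊆ T → T ⊆ N → ∀ i ∈ N, i ∉ T →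
      f (insert i S) - f S ≥ γ * (f (insert i T) - f T)) :
    ∀ S : Finset α, S ⊆ N → ∀ j ∈ N, j ∉ S →
      ∀ y : α → ℝ, (∀ i, y i = 0 ∨ y i = 1) →
        f S + (f (insert j S) - f S) +
            ∑ i ∈ N \ insert j S, (1 / γ) * (f (insert i S) - f S) * y i ≥
          f (insert j S) +
            ∑ i ∈ N \ insert j S,
              (f (insert i (insert j S)) - f (insert j S)) * y i := by
  intro S hS j hjN hjS y hy
  have hsum : ∑ i ∈ N \ insert j S, (1 / γ) * (f (insert i S) - f S) * y i ≥
      ∑ i ∈ N \ insert j S, (f (insert i (insert j S)) - f (insert j S)) * y i := by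
    apply Finset.sum_le_sum
    intro i hi
    simp only [Finset.mem_sdiff, Finset.mem_insert] at hi
    obtain ⟨hiN, hi2⟩ := hi
    push_neg at hi2
    have hins : insert j S ⊆ N := Finset.insert_subset hjN hS
    have hkey := hii S (insert j S) (Finset.subset_insert j S) hins i hiN
      (by simp [hi2.1, hi2.2])
    have h1 : (1 / γ) * (f (insert i S) - f S) ≥
        f (insert i (insert j S)) - f (insert j S) := by
      rw [ge_iff_le, one_div, ← div_eq_inv_mul, le_div_iff₀ hγ0]
      linarith
    rcases hy i with h | h
    · simp [h]
    · rw [h, mul_one, mul_one]; exact h1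
  linarith
end

section
/- Let N be a finite set, w : N → ℝ, and let r : N × N → ℝ be symmetric with r(i,i) = 0 for all i. Define the combinatorial auction utility f(S) = Σ_{i∈S} w(i) + Σ_{{i,j}⊆S, i≠j} r(i,j) for S ⊆ N. Fix an integer k ≥ 1, and for each i ∈ N define L_i = min{ Σ_{j∈A} r(i,j) : A ⊆ N∖{i}, |A| ≤ k−1 } and U_i = max{ Σ_{j∈B} r(i,j) : B ⊆ N∖{i}, |B| ≤ k−1 }. Suppose w(i) + U_i > 0 for all i ∈ N and let γ̲ = min_{i∈N} (w(i) + L_i)/(w(i) + U_i), and assume γ̲ > 0. Then for all S ⊆ T ⊆ N with |T| ≤ k−1 and all i ∈ N∖T: f(T ∪ {i}) − f(T) ≥ 0 and f(S ∪ {i}) − f(S) ≥ γ̲·(f(T ∪ {i}) − f(T)); i.e., γ̲ is a lower bound on the submodular ratio of f over sets of cardinality at most k. (Validity of the lower bound γ̲ of the submodular ratio for the combinatorial auction utility, equation (23).) -/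
/-- Validity of the lower bound `γ̲` of the submodular ratio for the combinatorial
auction utility (equation (23)): with `f S = Σ_{i∈S} w i + Σ_{{i,j}⊆S, i≠j} r i j`
(written as `(Σ_{i∈S} Σ_{j∈S} r i j)/2` using symmetry and zero diagonal),
`L i` the minimum and `U i` the maximum of `Σ_{j∈A} r i j` over `A ⊆ N∖{i}` with
`|A| ≤ k−1`, `w i + U i > 0` for all `i ∈ N`, and
`γ̲ = min_{i∈N} (w i + L i)/(w i + U i) > 0`, every `S ⊆ T ⊆ N` with `|T| ≤ k−1`
and `i ∈ N∖T` satisfy `f({i}∣T) ≥ 0` and `f({i}∣S) ≥ γ̲·f({i}∣T)`. -/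
theorem ca_submodular_ratio_lower_bound {α : Type*} [DecidableEq α]
    (N : Finset α) (w : α → ℝ) (r : α → α → ℝ)
    (hsym : ∀ i j, r i j = r j i) (hdiag : ∀ i, r i i = 0)
    (f : Finset α → ℝ)
    (hf : ∀ S : Finset α, f S = ∑ i ∈ S, w i + (∑ i ∈ S, ∑ j ∈ S, r i j) / 2)
    (k : ℕ) (hk : 1 ≤ k)
    (L U : α → ℝ)
    (hL_lb : ∀ i, ∀ A : Finset α, A ⊆ N.erase i → A.card ≤ k - 1 →
      L i ≤ ∑ j ∈ A, r i j)
    (hL_mem : ∀ i, ∃ A : Finset α, A ⊆ N.erase i ∧ A.card ≤ k - 1 ∧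
      L i = ∑ j ∈ A, r i j)
    (hU_ub : ∀ i, ∀ B : Finset α, B ⊆ N.erase i → B.card ≤ k - 1 →
      ∑ j ∈ B, r i j ≤ U i)
    (hU_mem : ∀ i, ∃ B : Finset α, B ⊆ N.erase i ∧ B.card ≤ k - 1 ∧
      U i = ∑ j ∈ B, r i j)
    (hden : ∀ i ∈ N, 0 < w i + U i)
    (γ : ℝ) (hγ_lb : ∀ i ∈ N, γ ≤ (w i + L i) / (w i + U i))
    (hγ_mem : ∃ i ∈ N, γ = (w i + L i) / (w i + U i))
    (hγpos : 0 < γ) :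
    ∀ S T : Finset α, S ⊆ T → T ⊆ N → T.card ≤ k - 1 → ∀ i ∈ N, i ∉ T →
      0 ≤ f (insert i T) - f T ∧
        f (insert i S) - f S ≥ γ * (f (insert i T) - f T) := by
  intro S T hST hTN hTcard i hiN hiT
  have hiS : i ∉ S := fun h => hiT (hST h)
  -- marginal formula
  have marg : ∀ A : Finset α, i ∉ A → f (insert i A) - f A = w i + ∑ j ∈ A, r i j := by
    intro A hiA
    have h1 : ∑ a ∈ insert i A, ∑ b ∈ insert i A, r a b
        = ∑ a ∈ A, ∑ b ∈ A, r a b + 2 * ∑ j ∈ A, r i j := by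
      rw [Finset.sum_insert hiA]
      have : ∀ a ∈ A, ∑ b ∈ insert i A, r a b = r a i + ∑ b ∈ A, r a b := by
        intro a _; rw [Finset.sum_insert hiA]
      rw [Finset.sum_congr rfl this, Finset.sum_insert hiA, hdiag,
        Finset.sum_add_distrib]
      have h2 : ∑ a ∈ A, r a i = ∑ a ∈ A, r i a :=
        Finset.sum_congr rfl fun a _ => hsym a i
      rw [h2]; ring
    rw [hf, hf, Finset.sum_insert hiA, h1]; ring
  -- bounds
  have hScard : S.card ≤ k - 1 := le_trans (Finset.card_le_card hST) hTcard
  have hSsub : S ⊆ N.erase i := fun x hx =>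
    Finset.mem_erase.2 ⟨fun h => hiS (h ▸ hx), hTN (hST hx)⟩
  have hTsub : T ⊆ N.erase i := fun x hx =>
    Finset.mem_erase.2 ⟨fun h => hiT (h ▸ hx), hTN hx⟩
  have hLS : L i ≤ ∑ j ∈ S, r i j := hL_lb i S hSsub hScard
  have hLT : L i ≤ ∑ j ∈ T, r i j := hL_lb i T hTsub hTcard
  have hUT : ∑ j ∈ T, r i j ≤ U i := hU_ub i T hTsub hTcard
  have hd := hden i hiN
  have hγi := hγ_lb i hiN
  have hLpos : 0 < w i + L i := by
    have : 0 < (w i + L i) / (w i + U i) := lt_of_lt_of_le hγpos hγi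
    nlinarith [div_mul_cancel₀ (w i + L i) hd.ne']
  rw [marg T hiT, marg S hiS]
  constructor
  · linarith
  · have h3 : γ * (w i + U i) ≤ w i + L i := by
      exact (le_div_iff₀ hd).1 hγi
    have h4 : γ * (w i + ∑ j ∈ T, r i j) ≤ γ * (w i + U i) := by
      apply mul_le_mul_of_nonneg_left (by linarith) hγpos.le
    linarith
end
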